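/- Let m ≥ 8 be an integer and M₁ = [[2m,1,0],[m²,0,1],[1,0,0]], M₂ = [[2m+2,1,0],[(m+1)²,0,1],[1,0,0]]. Then for every n ≥ 1, every choice i₁,…,i_n ∈ {1,2}, and every nonzero vector x in the cone 𝔠, the product P = M_{i_n}⋯M_{i_1} satisfies ‖P x‖₁ ≥ (1.9m)^n ‖x‖₁; in particular the operator norm of any length-n product of matrices from {M₁,M₂} is at least (1.9m)^n. -/

import Mathlib

open Matrix

noncomputable section

/-- `M₁ = [[2m,1,0],[m²,0,1],[1,0,0]]`, the substitution matrix of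
`ζ_m : 0 ↦ 0^{2m} 1^{m²} 2, 1 ↦ 0, 2 ↦ 1`. -/
def M1 (m : ℤ) : Matrix (Fin 3) (Fin 3) ℝ :=
  !![2 * (m : ℝ), 1, 0; (m : ℝ) ^ 2, 0, 1; 1, 0, 0]

/-- `M₂ = [[2m+2,1,0],[(m+1)²,0,1],[1,0,0]]`, the substitution matrix of `ζ_{m+1}`. -/
def M2 (m : ℤ) : Matrix (Fin 3) (Fin 3) ℝ :=
  !![2 * (m : ℝ) + 2, 1, 0; ((m : ℝ) + 1) ^ 2, 0, 1; 1, 0, 0]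

/-- The cone `𝔠`: the zero vector together with all `(x₁,x₂,x₃)` with `x₃ > 0`,
`2.3 m ≤ x₁/x₃ ≤ 2.5 m + 3` and `m² ≤ x₂/x₃ ≤ m² + 2m + 2`. -/
def cone (m : ℤ) : Set (Fin 3 → ℝ) :=
  {x | x = 0 ∨ (0 < x 2 ∧
    2.3 * (m : ℝ) ≤ x 0 / x 2 ∧ x 0 / x 2 ≤ 2.5 * (m : ℝ) + 3 ∧
    (m : ℝ) ^ 2 ≤ x 1 / x 2 ∧ x 1 / x 2 ≤ (m : ℝ) ^ 2 + 2 * (m : ℝ) + 2)}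

/-- The `ℓ¹` norm on `ℝ³`. -/
def l1 (x : Fin 3 → ℝ) : ℝ := |x 0| + |x 1| + |x 2|

/-- The operator norm of a `3 × 3` real matrix with respect to the `ℓ¹` norm. -/
def l1OpNorm (P : Matrix (Fin 3) (Fin 3) ℝ) : ℝ :=
  sSup {c : ℝ | ∃ x : Fin 3 → ℝ, x ≠ 0 ∧ c = l1 (P.mulVec x) / l1 x}

/-! Both matrices are `S a = [[2a,1,0],[a²,0,1],[1,0,0]]`, with `a = m` and `a = m + 1`.
For `m ≥ 8` and `m ≤ a ≤ m + 1`, `S a` maps the nonzero part of the cone `𝔠` into itself.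
Cone vectors have positive coordinates, so the `ℓ¹` norm is linear on `𝔠` and the expansion
`‖S a x‖₁ ≥ 1.9 m ‖x‖₁` becomes a polynomial inequality in `m` and the coordinates of `x`.
Iterating gives the bound for products, and the cone vector `(2.3 m, m², 1)` witnesses the
lower bound on the operator norm. -/

theorem l1_eq_sum (x : Fin 3 → ℝ) : l1 x = ∑ i, |x i| := by
  simp [l1, Fin.sum_univ_three]

theorem l1_pos {x : Fin 3 → ℝ} (hx : x ≠ 0) : 0 < l1 x := by
  obtain ⟨i, hi⟩ := Function.ne_iff.mp hx
  rw [l1_eq_sum]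
  exact Finset.sum_pos' (fun j _ => abs_nonneg (x j)) ⟨i, Finset.mem_univ i, abs_pos.mpr hi⟩

theorem l1_mulVec_le (P : Matrix (Fin 3) (Fin 3) ℝ) (x : Fin 3 → ℝ) :
    l1 (P *ᵥ x) ≤ (∑ i, ∑ j, |P i j|) * l1 x := by
  have hx : ∀ j, |x j| ≤ l1 x := fun j => by
    rw [l1_eq_sum]; exact Finset.single_le_sum (fun k _ => abs_nonneg (x k)) (Finset.mem_univ j)
  calc l1 (P *ᵥ x) = ∑ i, |∑ j, P i j * x j| := by simp [l1_eq_sum, mulVec, dotProduct]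
    _ ≤ ∑ i, ∑ j, |P i j| * l1 x := by
      gcongr with i
      refine (Finset.abs_sum_le_sum_abs _ _).trans (Finset.sum_le_sum fun j _ => ?_)
      rw [abs_mul]
      exact mul_le_mul_of_nonneg_left (hx j) (abs_nonneg _)
    _ = (∑ i, ∑ j, |P i j|) * l1 x := by simp [Finset.sum_mul]

theorem div_le_l1OpNorm (P : Matrix (Fin 3) (Fin 3) ℝ) {x : Fin 3 → ℝ} (hx : x ≠ 0) :
    l1 (P *ᵥ x) / l1 x ≤ l1OpNorm P := by
  refine le_csSup ⟨∑ i, ∑ j, |P i j|, ?_⟩ ⟨x, hx, rfl⟩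
  rintro c ⟨y, hy, rfl⟩
  exact (div_le_iff₀ (l1_pos hy)).mpr (l1_mulVec_le P y)

theorem List.prod_mulVec_mem_and_le {ι : Type*} [Fintype ι] [DecidableEq ι]
    {C : Set (ι → ℝ)} {N : (ι → ℝ) → ℝ} {c : ℝ} (hc : 0 ≤ c) {L : List (Matrix ι ι ℝ)}
    (hL : ∀ A ∈ L, ∀ x ∈ C, A *ᵥ x ∈ C ∧ c * N x ≤ N (A *ᵥ x)) :
    ∀ x ∈ C, L.prod *ᵥ x ∈ C ∧ c ^ L.length * N x ≤ N (L.prod *ᵥ x) := by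
  induction L with
  | nil => simp
  | cons A L ih =>
    intro x hx
    obtain ⟨hLx, hNLx⟩ := ih (fun B hB => hL B (List.mem_cons_of_mem A hB)) x hx
    obtain ⟨hALx, hNALx⟩ := hL A List.mem_cons_self _ hLx
    rw [List.prod_cons, ← mulVec_mulVec, List.length_cons, pow_succ']
    refine ⟨hALx, ?_⟩
    calc c * c ^ L.length * N x = c * (c ^ L.length * N x) := mul_assoc _ _ _
      _ ≤ c * N (L.prod *ᵥ x) := mul_le_mul_of_nonneg_left hNLx hc
      _ ≤ N (A *ᵥ (L.prod *ᵥ x)) := hNALx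

def substMatrix (a : ℝ) : Matrix (Fin 3) (Fin 3) ℝ :=
  !![2 * a, 1, 0; a ^ 2, 0, 1; 1, 0, 0]

theorem M1_eq_substMatrix (m : ℤ) : M1 m = substMatrix m := rfl

theorem M2_eq_substMatrix (m : ℤ) : M2 m = substMatrix (m + 1) := by
  rw [M2, substMatrix, mul_add, mul_one]

theorem substMatrix_mulVec (a : ℝ) (x : Fin 3 → ℝ) :
    substMatrix a *ᵥ x = ![2 * a * x 0 + x 1, a ^ 2 * x 0 + x 2, x 0] := by
  ext i
  fin_cases i <;> simp [substMatrix, mulVec, dotProduct, Fin.sum_univ_three]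

theorem mem_cone_diff_zero_iff (m : ℤ) (x : Fin 3 → ℝ) :
    x ∈ cone m \ {0} ↔ 0 < x 2 ∧
      2.3 * (m : ℝ) * x 2 ≤ x 0 ∧ x 0 ≤ (2.5 * (m : ℝ) + 3) * x 2 ∧
      (m : ℝ) ^ 2 * x 2 ≤ x 1 ∧ x 1 ≤ ((m : ℝ) ^ 2 + 2 * (m : ℝ) + 2) * x 2 := by
  constructor
  · rintro ⟨hx | ⟨ht, h₁, h₂, h₃, h₄⟩, hx0⟩
    · exact absurd hx hx0
    · exact ⟨ht, (le_div_iff₀ ht).mp h₁, (div_le_iff₀ ht).mp h₂,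
        (le_div_iff₀ ht).mp h₃, (div_le_iff₀ ht).mp h₄⟩
  · rintro ⟨ht, h₁, h₂, h₃, h₄⟩
    refine ⟨Or.inr ⟨ht, (le_div_iff₀ ht).mpr h₁, (div_le_iff₀ ht).mpr h₂,
      (le_div_iff₀ ht).mpr h₃, (div_le_iff₀ ht).mpr h₄⟩, fun hx => ?_⟩
    simp [show x = 0 from hx] at ht

section

variable {m : ℤ} {a : ℝ} {x : Fin 3 → ℝ}

theorem substMatrix_mulVec_mem_cone (hm : 8 ≤ m) (ha : (m : ℝ) ≤ a) (ha' : a ≤ m + 1)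
    (hx : x ∈ cone m \ {0}) : substMatrix a *ᵥ x ∈ cone m \ {0} := by
  have hm' : (8 : ℝ) ≤ m := by exact_mod_cast hm
  obtain ⟨ht, h₁, h₂, h₃, h₄⟩ := (mem_cone_diff_zero_iff m x).mp hx
  have hp : 0 < x 0 := by nlinarith
  have ha₁ : (m : ℝ) ^ 2 * x 0 ≤ a ^ 2 * x 0 := by gcongr
  have ha₂ : a ^ 2 * x 0 ≤ ((m : ℝ) + 1) ^ 2 * x 0 := by gcongr; linarith
  rw [mem_cone_diff_zero_iff, substMatrix_mulVec]
  simp only [Matrix.cons_val_zero, Matrix.cons_val_one, Matrix.cons_val_two, Matrix.head_cons,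
    Matrix.tail_cons]
  refine ⟨hp, by nlinarith, by nlinarith, by nlinarith, by nlinarith⟩

theorem l1_substMatrix_mulVec_ge (hm : 8 ≤ m) (ha : (m : ℝ) ≤ a)
    (hx : x ∈ cone m \ {0}) : 1.9 * (m : ℝ) * l1 x ≤ l1 (substMatrix a *ᵥ x) := by
  have hm' : (8 : ℝ) ≤ m := by exact_mod_cast hm
  obtain ⟨ht, h₁, -, h₃, h₄⟩ := (mem_cone_diff_zero_iff m x).mp hx
  have hp : 0 < x 0 := by nlinarith
  have hq : 0 < x 1 := by nlinarith
  have ha₁ : (m : ℝ) ^ 2 * x 0 ≤ a ^ 2 * x 0 := by gcongr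
  rw [substMatrix_mulVec]
  simp only [l1, Matrix.cons_val_zero, Matrix.cons_val_one, Matrix.cons_val_two,
    Matrix.head_cons, Matrix.tail_cons]
  rw [abs_of_pos hp, abs_of_pos hq, abs_of_pos ht, abs_of_pos (by nlinarith),
    abs_of_pos (by nlinarith)]
  -- The loss `1.9 m · x 1 ≤ 1.9 m (m² + 2m + 2) · x 2` is paid for by `m² · x 0 ≥ 2.3 m³ · x 2`.
  nlinarith [mul_le_mul_of_nonneg_left h₁ (sq_nonneg (m : ℝ)),
    mul_le_mul_of_nonneg_left h₄ (by linarith : (0 : ℝ) ≤ 1.9 * m),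
    mul_le_mul_of_nonneg_left h₁ (by linarith : (0 : ℝ) ≤ 0.1 * m + 1),
    mul_nonneg (mul_nonneg (sub_nonneg.2 hm') (sq_nonneg (m : ℝ))) ht.le,
    mul_nonneg (mul_nonneg (sub_nonneg.2 hm') (by linarith : (0 : ℝ) ≤ m)) ht.le]

end

theorem mulVec_mem_cone_and_expands {m : ℤ} (hm : 8 ≤ m) {A : Matrix (Fin 3) (Fin 3) ℝ}
    (hA : A = M1 m ∨ A = M2 m) {x : Fin 3 → ℝ} (hx : x ∈ cone m \ {0}) :
    A *ᵥ x ∈ cone m \ {0} ∧ 1.9 * (m : ℝ) * l1 x ≤ l1 (A *ᵥ x) := by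
  obtain ⟨a, rfl, ha, ha'⟩ : ∃ a : ℝ, A = substMatrix a ∧ (m : ℝ) ≤ a ∧ a ≤ m + 1 := by
    rcases hA with rfl | rfl
    · exact ⟨m, M1_eq_substMatrix m, le_rfl, by linarith⟩
    · exact ⟨m + 1, M2_eq_substMatrix m, by linarith, le_rfl⟩
  exact ⟨substMatrix_mulVec_mem_cone hm ha ha' hx, l1_substMatrix_mulVec_ge hm ha hx⟩

theorem stmt12_general (m : ℤ) (hm : 8 ≤ m) (n : ℕ)
    (M : Fin n → Matrix (Fin 3) (Fin 3) ℝ)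
    (hM : ∀ j, M j = M1 m ∨ M j = M2 m) :
    (∀ x ∈ cone m, x ≠ 0 →
      (1.9 * (m : ℝ)) ^ n * l1 x ≤ l1 (((List.ofFn M).prod).mulVec x)) ∧
    (1.9 * (m : ℝ)) ^ n ≤ l1OpNorm (List.ofFn M).prod := by
  have hm' : (8 : ℝ) ≤ m := by exact_mod_cast hm
  have hstep : ∀ A ∈ List.ofFn M, ∀ x ∈ cone m \ {0},
      A *ᵥ x ∈ cone m \ {0} ∧ 1.9 * (m : ℝ) * l1 x ≤ l1 (A *ᵥ x) := by
    intro A hA x hx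
    obtain ⟨j, rfl⟩ := List.mem_ofFn.mp hA
    exact mulVec_mem_cone_and_expands hm (hM j) hx
  have hprod := List.prod_mulVec_mem_and_le (by linarith) hstep
  rw [List.length_ofFn] at hprod
  refine ⟨fun x hx hx0 => (hprod x ⟨hx, hx0⟩).2, ?_⟩
  have hx₀ : ![2.3 * (m : ℝ), (m : ℝ) ^ 2, 1] ∈ cone m \ {0} := by
    rw [mem_cone_diff_zero_iff]
    simp only [Matrix.cons_val_zero, Matrix.cons_val_one, Matrix.cons_val_two, Matrix.head_cons,
      Matrix.tail_cons]
    refine ⟨one_pos, by linarith, by linarith, by linarith, by linarith⟩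
  exact ((le_div_iff₀ (l1_pos hx₀.2)).mpr (hprod _ hx₀).2).trans (div_le_l1OpNorm _ hx₀.2)

/-- For `m ≥ 8`, every product `P = M_{i_n} ⋯ M_{i_1}` of `n ≥ 1` matrices from `{M₁, M₂}`
satisfies `‖P x‖₁ ≥ (1.9 m)ⁿ ‖x‖₁` for all nonzero `x` in the cone `𝔠`; in particular the
(`ℓ¹`) operator norm of any such length-`n` product is at least `(1.9 m)ⁿ`. -/
theorem stmt12 (m : ℤ) (hm : 8 ≤ m) (n : ℕ) (hn : 1 ≤ n)
    (M : Fin n → Matrix (Fin 3) (Fin 3) ℝ)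
    (hM : ∀ j, M j = M1 m ∨ M j = M2 m) :
    (∀ x ∈ cone m, x ≠ 0 →
      (1.9 * (m : ℝ)) ^ n * l1 x ≤ l1 (((List.ofFn M).prod).mulVec x)) ∧
    (1.9 * (m : ℝ)) ^ n ≤ l1OpNorm (List.ofFn M).prod :=
  stmt12_general m hm n M hM
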